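/- For all n ∈ ℕ and all N ≥ 1, the number of tournaments T on the vertex set {0,1,…,n−1} with i(T) < N is at most n! · 2^{n(N−1)}. -/

import Mathlib

/-- A tournament on a vertex set `V`: a loopless directed graph such that for all
distinct `x, y` exactly one of `(x,y)`, `(y,x)` is an arc. -/
structure Tournament (V : Type*) where
  rel : V → V → Prop
  irrefl : ∀ x, ¬ rel x x
  total : ∀ x y, x ≠ y → rel x y ∨ rel y x
  asymm : ∀ x y, rel x y → ¬ rel y x

namespace Tournament

variable {V : Type*} {W : Type*}

/-- The tournament obtained from `T` by reversing all arcs both of whose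
endpoints lie in `X`. -/
def inv (T : Tournament V) (X : Set V) : Tournament V where
  rel x y := (x ∈ X ∧ y ∈ X ∧ T.rel y x) ∨ ((x ∉ X ∨ y ∉ X) ∧ T.rel x y)
  irrefl x := by have := T.irrefl x; tauto
  total x y hxy := by
    have := T.total x y hxy
    by_cases hx : x ∈ X <;> by_cases hy : y ∈ X <;> tauto
  asymm x y := by have h1 := T.asymm x y; have h2 := T.asymm y x; tauto

/-- Successive inversions along a finite sequence of subsets (`X_0` first). -/
def invSeq (T : Tournament V) (Xs : List (Set V)) : Tournament V :=
  Xs.foldl Tournament.inv T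

/-- A tournament is acyclic (transitive) when its arc relation is transitive,
i.e. a strict linear order. -/
def IsAcyclic (T : Tournament V) : Prop :=
  ∀ x y z, T.rel x y → T.rel y z → T.rel x z

/-- The inversion index: the least number of subsets to be inverted to reach an
acyclic tournament. -/
noncomputable def index (T : Tournament V) : ℕ :=
  sInf {m | ∃ Xs : List (Set V), Xs.length = m ∧ (T.invSeq Xs).IsAcyclic}

/-- Induced subtournament on a set of vertices. -/
def restrict (T : Tournament V) (A : Set V) : Tournament A where
  rel x y := T.rel x y
  irrefl x := T.irrefl x
  total x y hxy := T.total x y (fun h => hxy (Subtype.ext h))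
  asymm x y := T.asymm x y

/-- `T − x`: the subtournament induced on `V ∖ {x}`. -/
def erase (T : Tournament V) (x : V) : Tournament {y : V // y ≠ x} :=
  T.restrict {y | y ≠ x}

/-- `S` embeds into `T`: `S` is isomorphic to the subtournament of `T` induced on
some subset of the vertices of `T`. -/
def Embeds (S : Tournament V) (T : Tournament W) : Prop :=
  ∃ f : V → W, Function.Injective f ∧ ∀ x y, S.rel x y ↔ T.rel (f x) (f y)

/-- Isomorphism of tournaments. -/
def Iso (S : Tournament V) (T : Tournament W) : Prop :=
  ∃ e : V ≃ W, ∀ x y, S.rel x y ↔ T.rel (e x) (e y)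

/-- The dual tournament, obtained by reversing all arcs. -/
def dual (T : Tournament V) : Tournament V where
  rel x y := T.rel y x
  irrefl x := T.irrefl x
  total x y hxy := (T.total x y hxy).symm
  asymm x y h := T.asymm y x h

/-- `X` is an interval of `T`. -/
def IsInterval (T : Tournament V) (X : Set V) : Prop :=
  ∀ y ∉ X, (∀ x ∈ X, T.rel x y) ∨ (∀ x ∈ X, T.rel y x)

/-- A tournament is indecomposable when all its intervals are trivial. -/
def Indecomposable (T : Tournament V) : Prop :=
  ∀ X : Set V, T.IsInterval X → X = ∅ ∨ X = Set.univ ∨ ∃ x, X = {x}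

end Tournament

/-- The transitive tournament `n̲` on `{0, …, n−1}`, with arcs `(i,j)` for `i < j`. -/
def linear (n : ℕ) : Tournament (Fin n) where
  rel x y := x < y
  irrefl x := lt_irrefl x
  total _ _ h := h.lt_or_gt
  asymm _ _ h := lt_asymm h

/-- `2ℕ_{<k} = {0, 2, …, 2(k−1)}` as a subset of `Fin N`. -/
def evensLT {N : ℕ} (k : ℕ) : Set (Fin N) := {i | (i : ℕ) % 2 = 0 ∧ (i : ℕ) < 2 * k}

/-- `2ℕ_{<k}+1 = {1, 3, …, 2k−1}` as a subset of `Fin N`. -/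
def oddsLT {N : ℕ} (k : ℕ) : Set (Fin N) := {i | (i : ℕ) % 2 = 1 ∧ (i : ℕ) < 2 * k}

/-!
Inversion is an involution, so if inverting `X₀, …, X_{M-1}` turns `T` into an acyclic tournament
`A`, then `T` is recovered from `A` by inverting the same sets in reverse order. Padding with empty
sets, a tournament of index at most `M` is therefore determined by an acyclic tournament (there are
at most `n!` of them, one per linear order) and `M` subsets of the `n` vertices.
-/

namespace Tournament

variable {V : Type*}

theorem rel_injective : Function.Injective (rel : Tournament V → V → V → Prop) := by
  rintro ⟨r, _, _, _⟩ ⟨r', _, _, _⟩ rfl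
  rfl

@[ext]
theorem ext {T S : Tournament V} (h : ∀ x y, T.rel x y ↔ S.rel x y) : T = S :=
  rel_injective (funext₂ fun x y => propext (h x y))

instance [Finite V] : Finite (Tournament V) :=
  Finite.of_injective _ rel_injective

@[simp]
theorem inv_inv (T : Tournament V) (X : Set V) : (T.inv X).inv X = T := by
  ext x y
  simp only [inv]
  by_cases hx : x ∈ X <;> by_cases hy : y ∈ X <;> tauto

@[simp]
theorem inv_empty (T : Tournament V) : T.inv ∅ = T := by
  ext x y
  simp [inv]

@[simp]
theorem invSeq_nil (T : Tournament V) : T.invSeq [] = T := rfl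

@[simp]
theorem invSeq_cons (T : Tournament V) (X : Set V) (Xs : List (Set V)) :
    T.invSeq (X :: Xs) = (T.inv X).invSeq Xs := rfl

theorem invSeq_append (T : Tournament V) (Xs Ys : List (Set V)) :
    T.invSeq (Xs ++ Ys) = (T.invSeq Xs).invSeq Ys :=
  List.foldl_append

theorem invSeq_replicate_empty (T : Tournament V) (k : ℕ) :
    T.invSeq (List.replicate k ∅) = T := by
  induction k with
  | zero => rfl
  | succ k ih => rw [List.replicate_succ, invSeq_cons, inv_empty, ih]

@[simp]
theorem invSeq_invSeq_reverse (T : Tournament V) (Xs : List (Set V)) :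
    (T.invSeq Xs).invSeq Xs.reverse = T := by
  induction Xs generalizing T with
  | nil => rfl
  | cons X Xs ih => rw [invSeq_cons, List.reverse_cons, invSeq_append, ih, invSeq_cons, inv_inv,
      invSeq_nil]

section ReversedPairs

variable [LinearOrder V]

def reversedPairs (T : Tournament V) : Set (V × V) :=
  {p | p.1 < p.2 ∧ T.rel p.2 p.1}

theorem isAcyclic_of_reversedPairs_eq_empty {T : Tournament V} (h : T.reversedPairs = ∅) :
    T.IsAcyclic := by
  have rel_imp_lt : ∀ x y, T.rel x y → x < y := fun x y hxy => by
    rcases lt_trichotomy x y with hlt | rfl | hgt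
    · exact hlt
    · exact absurd hxy (T.irrefl x)
    · exact (Set.eq_empty_iff_forall_notMem.mp h (y, x) ⟨hgt, hxy⟩).elim
  intro x y z hxy hyz
  have hxz := (rel_imp_lt x y hxy).trans (rel_imp_lt y z hyz)
  exact (T.total x z hxz.ne).resolve_right fun hzx => (rel_imp_lt z x hzx).not_gt hxz

theorem reversedPairs_inv_pair {T : Tournament V} {a b : V} (hab : (a, b) ∈ T.reversedPairs) :
    (T.inv {a, b}).reversedPairs = T.reversedPairs \ {(a, b)} := by
  obtain ⟨hlt, hba⟩ := hab
  ext ⟨x, y⟩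
  simp only [reversedPairs, inv, Set.mem_ofPred_eq, Set.mem_sdiff, Set.mem_insert_iff,
    Set.mem_singleton_iff, Prod.mk.injEq]
  have := T.asymm a b
  grind

theorem exists_invSeq_isAcyclic_of_linearOrder [Finite V] (T : Tournament V) :
    ∃ Xs : List (Set V), (T.invSeq Xs).IsAcyclic := by
  induction h : T.reversedPairs.ncard using Nat.strong_induction_on generalizing T with
  | _ k ih =>
    obtain hempty | ⟨⟨a, b⟩, hab⟩ := T.reversedPairs.eq_empty_or_nonempty
    · exact ⟨[], isAcyclic_of_reversedPairs_eq_empty hempty⟩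
    · have hlt : (T.inv {a, b}).reversedPairs.ncard < k := by
        rw [← h, reversedPairs_inv_pair hab]
        exact Set.ncard_sdiff_singleton_lt_of_mem hab
      obtain ⟨Xs, hXs⟩ := ih _ hlt (T.inv {a, b}) rfl
      exact ⟨{a, b} :: Xs, hXs⟩

end ReversedPairs

/- Without this, `index` could be the junk value `sInf ∅ = 0`. -/
theorem exists_invSeq_isAcyclic [Finite V] (T : Tournament V) :
    ∃ Xs : List (Set V), (T.invSeq Xs).IsAcyclic := by
  obtain ⟨k, ⟨e⟩⟩ := Finite.exists_equiv_fin V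
  let := LinearOrder.lift' e e.injective
  exact exists_invSeq_isAcyclic_of_linearOrder T

theorem exists_invSeq_length_eq_of_index_le [Finite V] {T : Tournament V} {M : ℕ}
    (h : T.index ≤ M) : ∃ Xs : List (Set V), Xs.length = M ∧ (T.invSeq Xs).IsAcyclic := by
  obtain ⟨Xs, hXs⟩ := T.exists_invSeq_isAcyclic
  obtain ⟨Ys, hlen, hYs⟩ : ∃ Ys : List (Set V), Ys.length = T.index ∧ (T.invSeq Ys).IsAcyclic :=
    Nat.sInf_mem (s := {m | ∃ Xs : List (Set V), Xs.length = m ∧ (T.invSeq Xs).IsAcyclic})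
      ⟨Xs.length, Xs, rfl, hXs⟩
  refine ⟨Ys ++ List.replicate (M - Ys.length) ∅, by simp; omega, ?_⟩
  rwa [invSeq_append, invSeq_replicate_empty]

theorem IsAcyclic.exists_equiv_fin [Fintype V] {A : Tournament V} (hA : A.IsAcyclic) :
    ∃ e : V ≃ Fin (Fintype.card V), ∀ x y, A.rel x y ↔ e x < e y := by
  classical
  have : IsStrictTotalOrder V A.rel :=
    { trichotomous := fun x y hxy hyx => by_contra fun hne => (A.total x y hne).elim hxy hyx
      irrefl := A.irrefl
      trans := hA }
  let := linearOrderOfSTO A.rel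
  exact ⟨(Fintype.orderIsoFinOfCardEq V rfl).symm.toEquiv, fun x y =>
    ((Fintype.orderIsoFinOfCardEq V rfl).symm.lt_iff_lt (x := x) (y := y)).symm⟩

theorem ncard_setOf_isAcyclic_le [Fintype V] :
    {A : Tournament V | A.IsAcyclic}.ncard ≤ (Fintype.card V).factorial := by
  classical
  choose e he using fun A : {A : Tournament V // A.IsAcyclic} => A.2.exists_equiv_fin
  have he_inj : Function.Injective e := fun A B hAB =>
    Subtype.ext <| ext fun x y => by rw [he, he, hAB]
  calc {A : Tournament V | A.IsAcyclic}.ncard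
      = Nat.card {A : Tournament V // A.IsAcyclic} := (Nat.card_coe_set_eq _).symm
    _ ≤ Nat.card (V ≃ Fin (Fintype.card V)) := Nat.card_le_card_of_injective e he_inj
    _ = (Fintype.card V).factorial := by
      rw [Nat.card_eq_fintype_card, Fintype.card_equiv (Fintype.equivFin V)]

theorem setOf_index_le_subset_image [Finite V] (M : ℕ) :
    {T : Tournament V | T.index ≤ M} ⊆
      (fun p : (Fin M → Set V) × Tournament V => p.2.invSeq (List.ofFn p.1).reverse) ''
        (Set.univ ×ˢ {A | A.IsAcyclic}) := by
  intro T hT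
  obtain ⟨Xs, rfl, hXs⟩ := exists_invSeq_length_eq_of_index_le hT
  exact ⟨(Xs.get, T.invSeq Xs), ⟨trivial, hXs⟩, by simp⟩

theorem ncard_setOf_index_le_le [Fintype V] (M : ℕ) :
    {T : Tournament V | T.index ≤ M}.ncard ≤
      (Fintype.card V).factorial * 2 ^ (Fintype.card V * M) := by
  calc {T : Tournament V | T.index ≤ M}.ncard
      ≤ (Set.univ ×ˢ {A : Tournament V | A.IsAcyclic} : Set ((Fin M → Set V) × _)).ncard :=
        (Set.ncard_le_ncard (setOf_index_le_subset_image M)).trans (Set.ncard_image_le)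
    _ = 2 ^ (Fintype.card V * M) * {A : Tournament V | A.IsAcyclic}.ncard := by
      rw [Set.ncard_prod, Set.ncard_univ, Nat.card_eq_fintype_card, Fintype.card_fun,
        Fintype.card_set, Fintype.card_fin, pow_mul]
    _ ≤ (Fintype.card V).factorial * 2 ^ (Fintype.card V * M) := by
      rw [mul_comm]
      gcongr
      exact ncard_setOf_isAcyclic_le

end Tournament

/-- for all `n` and `N ≥ 1`, the number of tournaments on
`{0, …, n−1}` of inversion index `< N` is at most `n! · 2^{n(N−1)}`. -/
theorem count_index_lt {n N : ℕ} (hN : 1 ≤ N) :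
    {T : Tournament (Fin n) | T.index < N}.ncard ≤
      Nat.factorial n * 2 ^ (n * (N - 1)) := by
  have hlt_iff_le : {T : Tournament (Fin n) | T.index < N} = {T | T.index ≤ N - 1} := by
    ext T
    simp only [Set.mem_ofPred_eq]
    omega
  simpa [hlt_iff_le] using Tournament.ncard_setOf_index_le_le (V := Fin n) (N - 1)
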